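/- arXiv:math/9911152 — 9 statements merged into one kernel-verified Lean document; each statement's English description precedes it below -/
import Mathlib

section
/- Let A be a positive semidefinite matrix in M_n(ℂ) and suppose y ∈ ℂ^n satisfies Ay = p, where p = (1,...,1). Then I(A) = ⟨Ay, y⟩^{-1} = (Σ_i y_i)^{-1}. -/
/-!
Write `s = y* A y`. Since `A y = p` and `A` is Hermitian, `s = y* p = p* y = Σ yᵢ` is real and
nonnegative. For `B = 1 - s⁻¹ y p*` one computes `B* A B = A - s⁻¹ P`, so `A - t P ⪰ 0` whenever
`t ≤ s⁻¹` (add the positive semidefinite `(s⁻¹ - t) P`). Conversely, testing `A - t P ⪰ 0` at `y`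
gives `s - t s² ≥ 0`, i.e. `t s ≤ 1`. Hence `I(A) = sup {t ≥ 0 | t s ≤ 1} = s⁻¹`.
-/

open Matrix ComplexOrder

/-- The minimal Hadamard index `I(A)`. -/
noncomputable def minIdx {k : Type*} [Fintype k] (A : Matrix k k ℂ) : ℝ :=
  sSup {t : ℝ | 0 ≤ t ∧ (A - (t : ℂ) • (Matrix.of fun _ _ => (1 : ℂ))).PosSemidef}

namespace Matrix

variable {n 𝕜 : Type*} [Fintype n]

theorem IsHermitian.star_dotProduct_eq_of_mulVec_eq [CommRing 𝕜] [StarRing 𝕜]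
    {A : Matrix n n 𝕜} (hA : A.IsHermitian) {y u : n → 𝕜} (hy : A *ᵥ y = u) :
    star u ⬝ᵥ y = star y ⬝ᵥ u := by
  rw [← hy, star_mulVec, hA.eq, ← dotProduct_mulVec]

theorem IsHermitian.conjTranspose_mul_mul_one_sub_vecMulVec [DecidableEq n] [Field 𝕜]
    [StarRing 𝕜] {A : Matrix n n 𝕜} (hA : A.IsHermitian) {y u : n → 𝕜} (hy : A *ᵥ y = u) :
    (1 - (star y ⬝ᵥ u)⁻¹ • vecMulVec y (star u))ᴴ * A *
        (1 - (star y ⬝ᵥ u)⁻¹ • vecMulVec y (star u)) =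
      A - (star y ⬝ᵥ u)⁻¹ • vecMulVec u (star u) := by
  have hu := hA.star_dotProduct_eq_of_mulVec_eq hy
  have hself : star (star y ⬝ᵥ u) = star y ⬝ᵥ u := by rw [← star_dotProduct, hu]
  have hAV : A * vecMulVec y (star u) = vecMulVec u (star u) := by rw [mul_vecMulVec, hy]
  have hVA : vecMulVec u (star y) * A = vecMulVec u (star u) := by
    rw [vecMulVec_mul, ← hy, star_mulVec, hA.eq]
  simp only [conjTranspose_sub, conjTranspose_one, conjTranspose_smul, conjTranspose_vecMulVec,
    star_star, star_inv₀, hself, sub_mul, mul_sub, one_mul, mul_one, smul_mul, Matrix.mul_smul,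
    hVA, hAV, vecMulVec_mul_vecMulVec, hu, vecMulVec_smul, smul_smul]
  obtain hs | hs := eq_or_ne (star y ⬝ᵥ u) 0
  · simp [hs]
  · rw [inv_mul_cancel₀ hs, mul_one, sub_self, sub_zero]

theorem PosSemidef.sub_inv_smul_vecMulVec [DecidableEq n] [Field 𝕜] [PartialOrder 𝕜]
    [StarRing 𝕜] {A : Matrix n n 𝕜} (hA : A.PosSemidef) {y u : n → 𝕜} (hy : A *ᵥ y = u) :
    (A - (star y ⬝ᵥ u)⁻¹ • vecMulVec u (star u)).PosSemidef := by
  rw [← hA.isHermitian.conjTranspose_mul_mul_one_sub_vecMulVec hy]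
  exact hA.conjTranspose_mul_mul_same _

theorem PosSemidef.posSemidef_sub_smul_vecMulVec_iff [RCLike 𝕜] {A : Matrix n n 𝕜}
    (hA : A.PosSemidef) {y u : n → 𝕜} (hy : A *ᵥ y = u) {r : ℝ} (hr : star y ⬝ᵥ u = r)
    (t : ℝ) : (A - (t : 𝕜) • vecMulVec u (star u)).PosSemidef ↔ t * r ≤ 1 := by
  classical
  have hr0 : 0 ≤ r := by simpa [hy, hr] using hA.dotProduct_mulVec_nonneg y
  obtain rfl | hr0 := hr0.eq_or_lt
  · have hu : u = 0 := by
      rw [← hy]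
      exact (hA.dotProduct_mulVec_zero_iff y).1 (by rw [hy, hr, RCLike.ofReal_zero])
    simpa [hu] using hA
  constructor
  · intro h
    have hq : star y ⬝ᵥ (A - (t : 𝕜) • vecMulVec u (star u)) *ᵥ y =
        ((r - t * r * r : ℝ) : 𝕜) := by
      rw [sub_mulVec, smul_mulVec, dotProduct_sub, dotProduct_smul, hy, dotProduct_mulVec,
        vecMul_vecMulVec, smul_dotProduct, hA.isHermitian.star_dotProduct_eq_of_mulVec_eq hy, hr]
      push_cast
      simp only [smul_eq_mul]
      ring
    have hqy := h.dotProduct_mulVec_nonneg y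
    rw [hq, RCLike.ofReal_nonneg] at hqy
    nlinarith
  · intro h
    have hsplit : A - (t : 𝕜) • vecMulVec u (star u) =
        (A - (star y ⬝ᵥ u)⁻¹ • vecMulVec u (star u)) +
          ((r⁻¹ - t : ℝ) : 𝕜) • vecMulVec u (star u) := by
      rw [hr]
      push_cast
      module
    rw [hsplit]
    refine (hA.sub_inv_smul_vecMulVec hy).add ((posSemidef_vecMulVec_self_star u).smul ?_)
    rw [RCLike.ofReal_nonneg, sub_nonneg]
    rwa [← one_div, le_div_iff₀ hr0]

end Matrix

-- For `r = 0` the set is unbounded, and both sides are `0` by the conventions for `sSup` and `⁻¹`.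
theorem Real.sSup_setOf_nonneg_mul_le_one {r : ℝ} (hr : 0 ≤ r) :
    sSup {t : ℝ | 0 ≤ t ∧ t * r ≤ 1} = r⁻¹ := by
  obtain rfl | hr := hr.eq_or_lt
  · simp only [mul_zero, zero_le_one, and_true, _root_.inv_zero]
    exact Real.sSup_of_not_bddAbove (not_bddAbove_Ici 0)
  · have hIcc : {t : ℝ | 0 ≤ t ∧ t * r ≤ 1} = Set.Icc 0 r⁻¹ := by
      ext t
      simp only [Set.mem_ofPred_eq, Set.mem_Icc, ← one_div, le_div_iff₀ hr]
    rw [hIcc, csSup_Icc (inv_nonneg.2 hr.le)]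

theorem minIdx_eq_of_mulVec_eq_one {n : ℕ} (A : Matrix (Fin n) (Fin n) ℂ)
    (hA : A.PosSemidef) (y : Fin n → ℂ) (hy : A.mulVec y = fun _ => 1) :
    (minIdx A : ℂ) = (star y ⬝ᵥ A.mulVec y)⁻¹ ∧ (minIdx A : ℂ) = (∑ i, y i)⁻¹ := by
  obtain ⟨r, hr⟩ : ∃ r : ℝ, star y ⬝ᵥ A *ᵥ y = r :=
    ⟨_, Complex.eq_re_of_ofReal_le (by exact_mod_cast hA.dotProduct_mulVec_nonneg y)⟩
  have hr0 : 0 ≤ r := Complex.zero_le_real.mp (hr ▸ hA.dotProduct_mulVec_nonneg y)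
  have hsum : ∑ i, y i = r := by
    rw [← hr, hy, ← hA.isHermitian.star_dotProduct_eq_of_mulVec_eq hy]
    simp [dotProduct]
  have hones : (of fun _ _ => 1 : Matrix (Fin n) (Fin n) ℂ) =
      vecMulVec (fun _ => 1) (star fun _ => 1) := by
    ext
    simp [vecMulVec]
  have hpsd (t : ℝ) : (A - (t : ℂ) • of fun _ _ => 1).PosSemidef ↔ t * r ≤ 1 := by
    rw [hones]
    exact hA.posSemidef_sub_smul_vecMulVec_iff hy (hy ▸ hr) t
  have hmin : minIdx A = r⁻¹ := by
    simp_rw [minIdx, hpsd]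
    exact Real.sSup_setOf_nonneg_mul_le_one hr0
  rw [hmin, hr, hsum]
  push_cast
  exact ⟨rfl, rfl⟩
end

section
/- For A positive semidefinite in M_n(ℂ), I(A) = min{⟨Az, z⟩ : z ∈ ℂ^n, Σ_{i=1}^n z_i = 1}. -/
/-! A minimiser of `⟨Az, z⟩` on the hyperplane `∑ zᵢ = 1` is a `z` with `Az = c • 𝟙` for a real `c`
(the Lagrange condition). Such a `z` exists by the Fredholm alternative for the Hermitian `A`:
either `𝟙 = Ay`, and `y` rescaled works, or some `u ∈ ker A` has `⟨u, 𝟙⟩ ≠ 0`, and `u` rescaled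
works with `c = 0`. For such a `z`, `A - cP = Bᴴ A B` with `B = I - z 𝟙ᵀ`, so `A - cP ⪰ 0`; and
evaluating `A - tP ⪰ 0` at any `x` with `∑ xᵢ = 1` gives `⟨Ax, x⟩ ≥ t`. Hence `c` is both the
largest admissible `t` and the least value of the quadratic form, attained at `z`. -/

open Matrix ComplexOrder

namespace Matrix

theorem of_one_eq_vecMulVec {ι α : Type*} [MulOneClass α] :
    (of fun _ _ => (1 : α) : Matrix ι ι α) = vecMulVec 1 1 := by
  ext; simp [vecMulVec_apply]

variable {ι : Type*} [Fintype ι]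

theorem IsHermitian.exists_mulVec_eq_zero_star_dotProduct_ne_zero {K : Type*} [Field K]
    [StarRing K] {A : Matrix ι ι K} (hA : A.IsHermitian) {v : ι → K}
    (hv : v ∉ LinearMap.range A.mulVecLin) :
    ∃ u, A *ᵥ u = 0 ∧ star u ⬝ᵥ v ≠ 0 := by
  classical
  obtain ⟨f, hfv, hf⟩ := Submodule.exists_dual_map_eq_bot_of_notMem hv inferInstance
  set w := (dotProductEquiv K ι).symm f
  have hf_eq (x) : f x = w ⬝ᵥ x := by
    conv_lhs => rw [← (dotProductEquiv K ι).apply_symm_apply f]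
    rfl
  have hwA : w ᵥ* A = 0 := by
    ext i
    have : f (A *ᵥ Pi.single i 1) ∈ (LinearMap.range A.mulVecLin).map f :=
      Submodule.mem_map_of_mem (LinearMap.mem_range_self A.mulVecLin _)
    rw [hf, Submodule.mem_bot, hf_eq, dotProduct_mulVec] at this
    simpa using this
  refine ⟨star w, ?_, by simpa [hf_eq] using hfv⟩
  rw [← star_star (A *ᵥ star w), star_mulVec, star_star, hA.eq, hwA, star_zero]

theorem star_dotProduct_one {R : Type*} [Semiring R] [StarRing R] (x : ι → R) :
    star x ⬝ᵥ 1 = star (∑ i, x i) := by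
  simp [dotProduct_one, star_sum]

theorem PosSemidef.exists_sum_eq_one_mulVec_eq_smul_one [Nonempty ι] {A : Matrix ι ι ℂ}
    (hA : A.PosSemidef) : ∃ z : ι → ℂ, ∑ i, z i = 1 ∧ ∃ c : ℝ, A *ᵥ z = (c : ℂ) • 1 := by
  by_cases h1 : (1 : ι → ℂ) ∈ LinearMap.range A.mulVecLin
  · obtain ⟨y, hy⟩ := h1
    replace hy : A *ᵥ y = 1 := hy
    set q := (star y ⬝ᵥ A *ᵥ y).re
    have hq : star y ⬝ᵥ A *ᵥ y = q :=
      Complex.eq_re_of_ofReal_le (by rw [Complex.ofReal_zero]; exact hA.dotProduct_mulVec_nonneg y)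
    have hq_ne : (q : ℂ) ≠ 0 := by
      rw [← hq, Ne, hA.dotProduct_mulVec_zero_iff, hy]
      exact one_ne_zero
    have hsum : ∑ i, y i = q := by
      rw [← star_star (∑ i, y i), ← star_dotProduct_one, ← hy, hq, Complex.star_def,
        Complex.conj_ofReal]
    refine ⟨(q : ℂ)⁻¹ • y, ?_, q⁻¹, ?_⟩
    · simp only [Pi.smul_apply, smul_eq_mul, ← Finset.mul_sum, hsum, inv_mul_cancel₀ hq_ne]
    · rw [mulVec_smul, hy, Complex.ofReal_inv]
  · obtain ⟨u, hAu, hu⟩ := hA.isHermitian.exists_mulVec_eq_zero_star_dotProduct_ne_zero h1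
    have hsum : ∑ i, u i ≠ 0 := by
      rwa [star_dotProduct_one, star_ne_zero] at hu
    refine ⟨(∑ i, u i)⁻¹ • u, ?_, 0, ?_⟩
    · simp only [Pi.smul_apply, smul_eq_mul, ← Finset.mul_sum, inv_mul_cancel₀ hsum]
    · rw [mulVec_smul, hAu, smul_zero, Complex.ofReal_zero, zero_smul]

theorem conjTranspose_mul_mul_eq_sub_smul_vecMulVec [DecidableEq ι] {A : Matrix ι ι ℂ}
    (hA : A.IsHermitian) {z : ι → ℂ} {c : ℝ} (hz : ∑ i, z i = 1) (hAz : A *ᵥ z = (c : ℂ) • 1) :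
    (1 - vecMulVec z 1)ᴴ * A * (1 - vecMulVec z 1) = A - (c : ℂ) • vecMulVec 1 1 := by
  have hzA : star z ᵥ* A = (c : ℂ) • 1 := by
    rw [← hA.eq, ← star_mulVec, hAz, star_smul, Complex.star_def, Complex.conj_ofReal, star_one]
  have hz1 : star z ⬝ᵥ (1 : ι → ℂ) = 1 := by
    rw [star_dotProduct_one, hz, star_one]
  rw [conjTranspose_sub, conjTranspose_one, conjTranspose_vecMulVec, star_one, Matrix.mul_assoc,
    mul_sub, mul_one, mul_vecMulVec, hAz, sub_mul, one_mul, mul_sub, vecMulVec_mul, hzA,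
    vecMulVec_mul_vecMulVec, dotProduct_smul, hz1, smul_eq_mul, mul_one, sub_self, sub_zero,
    smul_vecMulVec]

theorem star_dotProduct_sub_smul_vecMulVec_one_mulVec {R : Type*} [CommRing R] [StarRing R]
    (A : Matrix ι ι R) (t : R) {x : ι → R} (hx : ∑ i, x i = 1) :
    star x ⬝ᵥ (A - t • vecMulVec 1 1) *ᵥ x = star x ⬝ᵥ A *ᵥ x - t := by
  rw [sub_mulVec, dotProduct_sub, smul_mulVec, vecMulVec_mulVec, one_dotProduct, hx,
    MulOpposite.op_one, one_smul, dotProduct_smul, star_dotProduct_one, hx, star_one, smul_eq_mul,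
    mul_one]

section

variable {A : Matrix ι ι ℂ} {z : ι → ℂ} {c : ℝ}

theorem star_dotProduct_mulVec_eq_of_mulVec_eq_smul_one (hz : ∑ i, z i = 1)
    (hAz : A *ᵥ z = (c : ℂ) • 1) : star z ⬝ᵥ A *ᵥ z = c := by
  rw [hAz, dotProduct_smul, star_dotProduct_one, hz, star_one, smul_eq_mul, mul_one]

theorem PosSemidef.sub_smul_vecMulVec_one (hA : A.PosSemidef) (hz : ∑ i, z i = 1)
    (hAz : A *ᵥ z = (c : ℂ) • 1) : (A - (c : ℂ) • vecMulVec 1 1).PosSemidef := by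
  classical
  rw [← conjTranspose_mul_mul_eq_sub_smul_vecMulVec hA.isHermitian hz hAz]
  exact hA.conjTranspose_mul_mul_same _

theorem PosSemidef.isGreatest_of_mulVec_eq_smul_one (hA : A.PosSemidef) (hz : ∑ i, z i = 1)
    (hAz : A *ᵥ z = (c : ℂ) • 1) :
    IsGreatest {t : ℝ | 0 ≤ t ∧ (A - (t : ℂ) • vecMulVec 1 1).PosSemidef} c := by
  have hzz := star_dotProduct_mulVec_eq_of_mulVec_eq_smul_one hz hAz
  refine ⟨⟨?_, hA.sub_smul_vecMulVec_one hz hAz⟩, fun t ⟨_, ht⟩ ↦ ?_⟩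
  · simpa [hzz] using hA.dotProduct_mulVec_nonneg z
  · have := ht.dotProduct_mulVec_nonneg z
    rw [star_dotProduct_sub_smul_vecMulVec_one_mulVec _ _ hz, hzz, ← Complex.ofReal_sub,
      Complex.zero_le_real] at this
    linarith

theorem PosSemidef.isLeast_of_mulVec_eq_smul_one (hA : A.PosSemidef) (hz : ∑ i, z i = 1)
    (hAz : A *ᵥ z = (c : ℂ) • 1) :
    IsLeast {r : ℝ | ∃ x : ι → ℂ, ∑ i, x i = 1 ∧ star x ⬝ᵥ A *ᵥ x = r} c := by
  refine ⟨⟨z, hz, star_dotProduct_mulVec_eq_of_mulVec_eq_smul_one hz hAz⟩, ?_⟩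
  rintro r ⟨x, hx, hxr⟩
  have := (hA.sub_smul_vecMulVec_one hz hAz).dotProduct_mulVec_nonneg x
  rw [star_dotProduct_sub_smul_vecMulVec_one_mulVec _ _ hx, hxr, ← Complex.ofReal_sub,
    Complex.zero_le_real] at this
  linarith

end

end Matrix

/-- `I(A) = min { ⟨Az, z⟩ : ∑ z_i = 1 }` (the minimum is attained). -/
theorem minIdx_eq_min_quadratic_form {n : ℕ} (A : Matrix (Fin n) (Fin n) ℂ)
    (hn : 0 < n) (hA : A.PosSemidef) :
    minIdx A =
      sInf {r : ℝ | ∃ z : Fin n → ℂ, (∑ i, z i) = 1 ∧ star z ⬝ᵥ A.mulVec z = (r : ℂ)} ∧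
    ∃ z : Fin n → ℂ, (∑ i, z i) = 1 ∧ star z ⬝ᵥ A.mulVec z = (minIdx A : ℂ) := by
  have : Nonempty (Fin n) := Fin.pos_iff_nonempty.mp hn
  obtain ⟨z, hz, c, hAz⟩ := hA.exists_sum_eq_one_mulVec_eq_smul_one
  have hmin : minIdx A = c := by
    rw [minIdx, of_one_eq_vecMulVec]
    exact (hA.isGreatest_of_mulVec_eq_smul_one hz hAz).csSup_eq
  rw [hmin, (hA.isLeast_of_mulVec_eq_smul_one hz hAz).csInf_eq]
  exact ⟨rfl, z, hz, star_dotProduct_mulVec_eq_of_mulVec_eq_smul_one hz hAz⟩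
end

section
/- If A is a positive semidefinite n×n matrix and B is a positive semidefinite m×m matrix, then the minimal Hadamard index of the Kronecker product satisfies I(A ⊗ B) = I(A) · I(B). -/
open Matrix ComplexOrder Kronecker

section KroneckerProductVectors

variable {α k l : Type*} [Fintype k] [Fintype l]

theorem dotProduct_prod_mul [CommSemiring α] (f u : k → α) (g v : l → α) :
    (fun p : k × l => f p.1 * g p.2) ⬝ᵥ (fun p => u p.1 * v p.2) = (f ⬝ᵥ u) * (g ⬝ᵥ v) := by
  simp only [dotProduct, Fintype.sum_prod_type, Finset.sum_mul_sum]
  exact Finset.sum_congr rfl fun i _ => Finset.sum_congr rfl fun j _ => by ring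

theorem kronecker_mulVec_prod_mul [CommSemiring α] (A : Matrix k k α) (B : Matrix l l α)
    (x : k → α) (y : l → α) :
    (A ⊗ₖ B) *ᵥ (fun p => x p.1 * y p.2) = fun p => (A *ᵥ x) p.1 * (B *ᵥ y) p.2 :=
  funext fun p => dotProduct_prod_mul (A p.1) x (B p.2) y

theorem star_dotProduct_kronecker_mulVec_prod_mul [CommSemiring α] [StarRing α]
    (A : Matrix k k α) (B : Matrix l l α) (x : k → α) (y : l → α) :
    star (fun p : k × l => x p.1 * y p.2) ⬝ᵥ (A ⊗ₖ B) *ᵥ (fun p => x p.1 * y p.2)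
      = (star x ⬝ᵥ A *ᵥ x) * (star y ⬝ᵥ B *ᵥ y) := by
  have hstar : star (fun p : k × l => x p.1 * y p.2) = fun p => star x p.1 * star y p.2 :=
    funext fun p => star_mul' (x p.1) (y p.2)
  rw [kronecker_mulVec_prod_mul, hstar, dotProduct_prod_mul]

end KroneckerProductVectors

theorem ones_kronecker_ones {k l : Type*} :
    (Matrix.of fun _ _ => (1 : ℂ) : Matrix k k ℂ) ⊗ₖ (Matrix.of fun _ _ => (1 : ℂ) : Matrix l l ℂ)
      = Matrix.of fun _ _ => 1 := by
  ext
  simp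

section AllOnes

variable {k : Type*} [Fintype k]

theorem posSemidef_smul_ones {t : ℝ} (ht : 0 ≤ t) :
    ((t : ℂ) • (Matrix.of fun _ _ => (1 : ℂ) : Matrix k k ℂ)).PosSemidef := by
  have hJ : (Matrix.of fun _ _ => (1 : ℂ) : Matrix k k ℂ) = vecMulVec 1 (star 1) := by
    ext; simp [vecMulVec_apply]
  rw [hJ]
  exact (posSemidef_vecMulVec_self_star 1).smul (by exact_mod_cast ht)

theorem star_dotProduct_ones_mulVec (x : k → ℂ) :
    star x ⬝ᵥ (Matrix.of fun _ _ => (1 : ℂ)) *ᵥ x = (Complex.normSq (∑ i, x i) : ℂ) := by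
  simp only [dotProduct, mulVec, Matrix.of_apply, one_mul, Pi.star_apply, Complex.star_def]
  rw [← Finset.sum_mul, ← map_sum, Complex.normSq_eq_conj_mul_self]

end AllOnes

theorem bddAbove_setOf_posSemidef_sub_smul_ones {k : Type*} [Nonempty k] (A : Matrix k k ℂ) :
    BddAbove {t : ℝ | 0 ≤ t ∧ (A - (t : ℂ) • (Matrix.of fun _ _ => (1 : ℂ))).PosSemidef} := by
  obtain ⟨i⟩ := ‹Nonempty k›
  refine ⟨(A i i).re, fun t ⟨_, ht⟩ => ?_⟩
  simpa using (Complex.nonneg_iff.mp (ht.diag_nonneg (i := i))).1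

section MinIdx

variable {k : Type*} [Fintype k] {A : Matrix k k ℂ}

theorem posSemidef_sub_smul_ones_iff (hA : A.IsHermitian) (t : ℝ) :
    (A - (t : ℂ) • (Matrix.of fun _ _ => (1 : ℂ))).PosSemidef
      ↔ ∀ x : k → ℂ, t * Complex.normSq (∑ i, x i) ≤ (star x ⬝ᵥ A *ᵥ x).re := by
  have hHerm : (A - (t : ℂ) • (Matrix.of fun _ _ => (1 : ℂ))).IsHermitian :=
    hA.sub (by ext; simp)
  rw [posSemidef_iff_dotProduct_mulVec, and_iff_right hHerm]
  refine forall_congr' fun x => ?_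
  rw [sub_mulVec, dotProduct_sub, smul_mulVec, dotProduct_smul, star_dotProduct_ones_mulVec,
    smul_eq_mul, Complex.nonneg_iff]
  have him : (star x ⬝ᵥ A *ᵥ x).im = 0 := hA.im_star_dotProduct_mulVec_self x
  simp [him]

theorem le_minIdx_of_posSemidef [Nonempty k] {t : ℝ} (ht : 0 ≤ t)
    (h : (A - (t : ℂ) • (Matrix.of fun _ _ => (1 : ℂ))).PosSemidef) : t ≤ minIdx A :=
  le_csSup (bddAbove_setOf_posSemidef_sub_smul_ones A) ⟨ht, h⟩

theorem minIdx_nonneg [Nonempty k] (hA : A.PosSemidef) : 0 ≤ minIdx A :=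
  le_minIdx_of_posSemidef le_rfl (by simpa using hA)

-- Over an empty index every `t ≥ 0` is admissible, and `sSup` of an unbounded set is `0`.
theorem minIdx_of_isEmpty [IsEmpty k] (A : Matrix k k ℂ) : minIdx A = 0 := by
  have hset : {t : ℝ | 0 ≤ t ∧ (A - (t : ℂ) • (Matrix.of fun _ _ => (1 : ℂ))).PosSemidef}
      = Set.Ici 0 := by
    ext t
    simp [Subsingleton.elim (A - _) 0, PosSemidef.zero]
  rw [minIdx, hset]
  exact Real.sSup_of_not_bddAbove (not_bddAbove_Ici 0)

theorem minIdx_mul_normSq_le [Nonempty k] (hA : A.PosSemidef) (x : k → ℂ) :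
    minIdx A * Complex.normSq (∑ i, x i) ≤ (star x ⬝ᵥ A *ᵥ x).re := by
  have hq : 0 ≤ (star x ⬝ᵥ A *ᵥ x).re := (Complex.nonneg_iff.mp (hA.dotProduct_mulVec_nonneg x)).1
  rcases (Complex.normSq_nonneg (∑ i, x i)).eq_or_lt with hs | hs
  · rwa [← hs, mul_zero]
  rw [← le_div_iff₀ hs]
  refine csSup_le ⟨0, le_rfl, by simpa using hA⟩ fun t ⟨_, ht⟩ => ?_
  rw [le_div_iff₀ hs]
  exact (posSemidef_sub_smul_ones_iff hA.isHermitian t).mp ht x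

theorem posSemidef_sub_minIdx_smul_ones [Nonempty k] (hA : A.PosSemidef) :
    (A - (minIdx A : ℂ) • (Matrix.of fun _ _ => (1 : ℂ))).PosSemidef :=
  (posSemidef_sub_smul_ones_iff hA.isHermitian _).mpr (minIdx_mul_normSq_le hA)

theorem le_mul_minIdx [Nonempty k] (hA : A.PosSemidef) {c r : ℝ} (hr : 0 ≤ r)
    (h : ∀ x : k → ℂ, c * Complex.normSq (∑ i, x i) ≤ r * (star x ⬝ᵥ A *ᵥ x).re) :
    c ≤ r * minIdx A := by
  rcases le_or_gt c 0 with hc | hc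
  · exact hc.trans (mul_nonneg hr (minIdx_nonneg hA))
  rcases hr.eq_or_lt with rfl | hr
  · classical
    obtain ⟨i⟩ := ‹Nonempty k›
    simpa [Finset.sum_pi_single'] using h (Pi.single i 1)
  rw [mul_comm, ← div_le_iff₀ hr]
  refine le_minIdx_of_posSemidef (div_nonneg hc.le hr.le)
    ((posSemidef_sub_smul_ones_iff hA.isHermitian _).mpr fun x => ?_)
  rw [div_mul_eq_mul_div, div_le_iff₀ hr, mul_comm _ r]
  exact h x

end MinIdx

section Kronecker

variable {k l : Type*} [Fintype k] [Fintype l] {A : Matrix k k ℂ} {B : Matrix l l ℂ}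

theorem minIdx_mul_minIdx_le_minIdx_kronecker [Nonempty k] [Nonempty l]
    (hA : A.PosSemidef) (hB : B.PosSemidef) : minIdx A * minIdx B ≤ minIdx (A ⊗ₖ B) := by
  have ha := minIdx_nonneg hA
  refine le_minIdx_of_posSemidef (mul_nonneg ha (minIdx_nonneg hB)) ?_
  have hsplit : A ⊗ₖ B - ((minIdx A * minIdx B : ℝ) : ℂ) • (Matrix.of fun _ _ => (1 : ℂ))
      = (A - (minIdx A : ℂ) • (Matrix.of fun _ _ => (1 : ℂ))) ⊗ₖ B
        + ((minIdx A : ℂ) • (Matrix.of fun _ _ => (1 : ℂ)))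
          ⊗ₖ (B - (minIdx B : ℂ) • (Matrix.of fun _ _ => (1 : ℂ))) := by
    ext ⟨i, j⟩ ⟨i', j'⟩
    simp only [kroneckerMap_apply, Matrix.sub_apply, Matrix.add_apply, Matrix.smul_apply,
      of_apply, smul_eq_mul, Complex.ofReal_mul]
    ring
  rw [hsplit]
  exact ((posSemidef_sub_minIdx_smul_ones hA).kronecker hB).add
    ((posSemidef_smul_ones ha).kronecker (posSemidef_sub_minIdx_smul_ones hB))

theorem minIdx_kronecker_le_mul_minIdx [Nonempty k] [Nonempty l]
    (hA : A.PosSemidef) (hB : B.PosSemidef) : minIdx (A ⊗ₖ B) ≤ minIdx A * minIdx B := by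
  have hprod : ∀ x y, minIdx (A ⊗ₖ B) * Complex.normSq (∑ j, y j) * Complex.normSq (∑ i, x i)
      ≤ (star y ⬝ᵥ B *ᵥ y).re * (star x ⬝ᵥ A *ᵥ x).re := fun x y => by
    have h := minIdx_mul_normSq_le (hA.kronecker hB) (fun p => x p.1 * y p.2)
    have him : (star y ⬝ᵥ B *ᵥ y).im = 0 := hB.isHermitian.im_star_dotProduct_mulVec_self y
    rw [star_dotProduct_kronecker_mulVec_prod_mul, Fintype.sum_prod_type, ← Finset.sum_mul_sum,
      Complex.normSq_mul, Complex.mul_re, him, mul_zero, sub_zero] at h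
    linarith
  have hy : ∀ y, minIdx (A ⊗ₖ B) * Complex.normSq (∑ j, y j) ≤ minIdx A * (star y ⬝ᵥ B *ᵥ y).re :=
    fun y => (le_mul_minIdx hA ((Complex.nonneg_iff.mp (hB.dotProduct_mulVec_nonneg y)).1)
      (hprod · y)).trans_eq (mul_comm _ _)
  exact le_mul_minIdx hB (minIdx_nonneg hA) hy

end Kronecker

theorem minIdx_kronecker {n m : ℕ} (A : Matrix (Fin n) (Fin n) ℂ)
    (B : Matrix (Fin m) (Fin m) ℂ) (hA : A.PosSemidef) (hB : B.PosSemidef) :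
    minIdx (A ⊗ₖ B) = minIdx A * minIdx B := by
  rcases isEmpty_or_nonempty (Fin n) with hn | hn
  · rw [minIdx_of_isEmpty, minIdx_of_isEmpty A, zero_mul]
  rcases isEmpty_or_nonempty (Fin m) with hm | hm
  · rw [minIdx_of_isEmpty, minIdx_of_isEmpty B, mul_zero]
  exact (minIdx_kronecker_le_mul_minIdx hA hB).antisymm
    (minIdx_mul_minIdx_le_minIdx_kronecker hA hB)
end

section
/- If a sequence (A_m) of positive semidefinite n×n matrices decreases to A (i.e., A_{m+1} ⪯ A_m for all m and A_m → A), then I(A_m) decreases to I(A), i.e., lim_{m→∞} I(A_m) = inf_m I(A_m) = I(A). -/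
open Matrix ComplexOrder

/-!
`I(M)` is the supremum of the closed set `{t ≥ 0 | M - tP ⪰ 0}`, which is the interval
`[0, I(M)]` and grows with `M` in the Loewner order. As the Loewner cone is closed, `A_m ⪰ L`
for all `m`, so `I(A_m)` is antitone, bounded below by `I(L)`, and converges to its infimum `t`.
Then `A_m - tP ⪰ 0` for every `m`, hence `L - tP ⪰ 0` in the limit, i.e. `t ≤ I(L)`.
-/

open Filter Topology Set
open scoped MatrixOrder

namespace Matrix

variable {k 𝕜 : Type*} [Fintype k] [RCLike 𝕜]

theorem isClosed_setOf_posSemidef : IsClosed {M : Matrix k k 𝕜 | M.PosSemidef} := by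
  have hset : {M : Matrix k k 𝕜 | M.PosSemidef} =
      {M | Mᴴ = M} ∩ ⋂ x : k → 𝕜, {M | 0 ≤ star x ⬝ᵥ M *ᵥ x} := by
    ext M
    simp only [posSemidef_iff_dotProduct_mulVec, mem_ofPred_eq, mem_inter_iff, mem_iInter]
    rfl
  rw [hset]
  refine (isClosed_eq continuous_id.matrix_conjTranspose continuous_id).inter
    (isClosed_iInter fun x => isClosed_le continuous_const ?_)
  exact continuous_const.dotProduct (continuous_id.matrix_mulVec continuous_const)

theorem orderClosedTopology : OrderClosedTopology (Matrix k k 𝕜) :=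
  ⟨isClosed_setOf_posSemidef.preimage (continuous_snd.sub continuous_fst)⟩

theorem posSemidef_allOnes : (of fun _ _ : k => (1 : 𝕜)).PosSemidef := by
  simpa [vecMulVec] using posSemidef_vecMulVec_self_star (fun _ : k => (1 : 𝕜))

end Matrix

section minIdx

variable {k : Type*}

/-- `minIdx M` unfolds to `sSup (minIdxSet M)`. -/
def minIdxSet (M : Matrix k k ℂ) : Set ℝ :=
  {t | 0 ≤ t ∧ (M - (t : ℂ) • of fun _ _ => (1 : ℂ)).PosSemidef}

theorem zero_mem_minIdxSet {M : Matrix k k ℂ} (hM : M.PosSemidef) : 0 ∈ minIdxSet M :=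
  ⟨le_rfl, by simpa using hM⟩

theorem minIdxSet_mono {M N : Matrix k k ℂ} (h : (M - N).PosSemidef) :
    minIdxSet N ⊆ minIdxSet M := fun t ⟨ht0, ht⟩ =>
  ⟨ht0, by simpa only [sub_add_sub_cancel] using h.add ht⟩

theorem bddAbove_minIdxSet [Nonempty k] (M : Matrix k k ℂ) : BddAbove (minIdxSet M) := by
  obtain ⟨i⟩ := ‹Nonempty k›
  refine ⟨(M i i).re, fun t ⟨_, ht⟩ => ?_⟩
  have hdiag := ht.diag_nonneg (i := i)
  simp only [Matrix.sub_apply, Matrix.smul_apply, of_apply, smul_eq_mul, mul_one,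
    sub_nonneg] at hdiag
  simpa using (Complex.le_def.mp hdiag).1

variable [Fintype k]

theorem minIdx_nonneg_s5 (M : Matrix k k ℂ) : 0 ≤ minIdx M :=
  Real.sSup_nonneg fun _ ht => ht.1

theorem mem_minIdxSet_of_le {M : Matrix k k ℂ} {s t : ℝ} (ht : t ∈ minIdxSet M) (hs : 0 ≤ s)
    (hst : s ≤ t) : s ∈ minIdxSet M := by
  refine ⟨hs, ?_⟩
  have hdiff : (0 : ℂ) ≤ ((t - s : ℝ) : ℂ) := Complex.zero_le_real.mpr (sub_nonneg.mpr hst)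
  convert ht.2.add (posSemidef_allOnes.smul hdiff) using 1
  push_cast
  module

theorem isClosed_minIdxSet (M : Matrix k k ℂ) : IsClosed (minIdxSet M) :=
  isClosed_Ici.inter <| isClosed_setOf_posSemidef.preimage <|
    continuous_const.sub (Complex.continuous_ofReal.smul continuous_const)

variable [Nonempty k]

theorem minIdx_mem_minIdxSet {M : Matrix k k ℂ} (hM : M.PosSemidef) : minIdx M ∈ minIdxSet M :=
  (isClosed_minIdxSet M).csSup_mem ⟨0, zero_mem_minIdxSet hM⟩ (bddAbove_minIdxSet M)

theorem minIdx_mono {M N : Matrix k k ℂ} (hN : N.PosSemidef) (h : (M - N).PosSemidef) :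
    minIdx N ≤ minIdx M :=
  csSup_le_csSup (bddAbove_minIdxSet M) ⟨0, zero_mem_minIdxSet hN⟩ (minIdxSet_mono h)

theorem le_minIdx_of_tendsto {ι : Type*} {l : Filter ι} [l.NeBot] {A : ι → Matrix k k ℂ}
    {L : Matrix k k ℂ} {t : ℝ} (hlim : Tendsto A l (𝓝 L)) (hA : ∀ᶠ i in l, (A i).PosSemidef)
    (ht : ∀ᶠ i in l, t ≤ minIdx (A i)) : t ≤ minIdx L := by
  rcases lt_or_ge t 0 with ht0 | ht0
  · exact ht0.le.trans (minIdx_nonneg_s5 L)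
  have hmem : ∀ᶠ i in l, t ∈ minIdxSet (A i) := by
    filter_upwards [hA, ht] with i hAi hti
    exact mem_minIdxSet_of_le (minIdx_mem_minIdxSet hAi) ht0 hti
  refine le_csSup (bddAbove_minIdxSet L) ⟨ht0, ?_⟩
  exact isClosed_setOf_posSemidef.mem_of_tendsto (hlim.sub tendsto_const_nhds)
    (hmem.mono fun _ hi => hi.2)

end minIdx

attribute [local instance] Matrix.orderClosedTopology

theorem minIdx_of_decreasing_limit_general {n : ℕ} (A : ℕ → Matrix (Fin n) (Fin n) ℂ)
    (L : Matrix (Fin n) (Fin n) ℂ)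
    (hL : L.PosSemidef)
    (hdec : ∀ m, (A m - A (m + 1)).PosSemidef)
    (hlim : Filter.Tendsto A Filter.atTop (nhds L)) :
    Filter.Tendsto (fun m => minIdx (A m)) Filter.atTop (nhds (minIdx L)) ∧
    (⨅ m, minIdx (A m)) = minIdx L := by
  rcases isEmpty_or_nonempty (Fin n) with _ | _
  · obtain rfl : A = fun _ => L := funext fun _ => Subsingleton.elim _ _
    exact ⟨tendsto_const_nhds, ciInf_const⟩
  have hanti : Antitone A := antitone_nat_of_succ_le hdec
  have hAL : ∀ m, L ≤ A m := hanti.le_of_tendsto hlim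
  have hpsd : ∀ m, (A m).PosSemidef := fun m =>
    nonneg_iff_posSemidef.mp ((nonneg_iff_posSemidef.mpr hL).trans (hAL m))
  have hmono : Antitone fun m => minIdx (A m) := fun _ j hij => minIdx_mono (hpsd j) (hanti hij)
  have hbdd : BddBelow (range fun m => minIdx (A m)) :=
    ⟨minIdx L, forall_mem_range.mpr fun m => minIdx_mono hL (hAL m)⟩
  have hinf : ⨅ m, minIdx (A m) = minIdx L :=
    le_antisymm (le_minIdx_of_tendsto hlim (.of_forall hpsd) (.of_forall (ciInf_le hbdd)))
      (le_ciInf fun m => minIdx_mono hL (hAL m))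
  exact ⟨hinf ▸ tendsto_atTop_ciInf hmono hbdd, hinf⟩

/-- If a sequence of positive semidefinite matrices decreases to `A`, then
`I(A_m)` decreases to `I(A)`: the limit and the infimum both equal `I(A)`. -/
theorem minIdx_of_decreasing_limit {n : ℕ} (A : ℕ → Matrix (Fin n) (Fin n) ℂ)
    (L : Matrix (Fin n) (Fin n) ℂ)
    (hpsd : ∀ m, (A m).PosSemidef) (hL : L.PosSemidef)
    (hdec : ∀ m, (A m - A (m + 1)).PosSemidef)
    (hlim : Filter.Tendsto A Filter.atTop (nhds L)) :
    Filter.Tendsto (fun m => minIdx (A m)) Filter.atTop (nhds (minIdx L)) ∧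
    (⨅ m, minIdx (A m)) = minIdx L :=
  minIdx_of_decreasing_limit_general A L hL hdec hlim
end

section
/- Let A ∈ M_n(ℂ), x ∈ ℂ^n a unit vector with all entries nonzero, y = (|x_1|²,...,|x_n|²), p = (1,...,1). If (A ∘ xx*)x = λx for some λ ∈ ℂ, then Ay = λp. Moreover if A is positive semidefinite then λ = I(A). -/
/-!
Entrywise, `(A ∘ xx*) x = x ∘ (A y)`, so cancelling the nonzero `xᵢ` gives `A y = λ p`.
If `A ⪰ 0`, then `λ = y* A y ≥ 0` since `∑ yᵢ = 1`. For every admissible `t`,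
`0 ≤ y* (A - t P) y = λ - t`. Conversely `v* A y = λ ∑ v̄ᵢ`, so Cauchy–Schwarz
`|v* A y|² ≤ (v* A v)(y* A y)` reads `λ |∑ vᵢ|² ≤ v* A v`, i.e. `A - λ P ⪰ 0`.
Hence `λ` is the maximum `I(A)`.
-/

open Matrix ComplexOrder

namespace Matrix

variable {n α 𝕜 : Type*} [Fintype n]

theorem hadamard_vecMulVec_mulVec [CommSemiring α] (A : Matrix n n α) (u w z : n → α) :
    (A ⊙ vecMulVec u w) *ᵥ z = u * (A *ᵥ (w * z)) := by
  ext i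
  simp only [mulVec, dotProduct, hadamard_apply, vecMulVec_apply, Pi.mul_apply, Finset.mul_sum]
  exact Finset.sum_congr rfl fun j _ => by ring

theorem star_dotProduct_allOnes_mulVec [CommSemiring α] [StarRing α] (v w : n → α) :
    star v ⬝ᵥ (of fun _ _ => (1 : α)) *ᵥ w = star (∑ i, v i) * ∑ i, w i := by
  simp [mulVec, dotProduct, star_sum, Finset.sum_mul]

theorem star_dotProduct_const [CommSemiring α] [StarRing α] (v : n → α) (c : α) :
    star v ⬝ᵥ (fun _ => c) = star (∑ i, v i) * c := by
  simp [dotProduct, star_sum, Finset.sum_mul]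

variable [RCLike 𝕜]

theorem PosSemidef.norm_dotProduct_mulVec_sq_le {A : Matrix n n 𝕜} (hA : A.PosSemidef)
    (v w : n → 𝕜) :
    ‖star v ⬝ᵥ A *ᵥ w‖ ^ 2 ≤
      RCLike.re (star v ⬝ᵥ A *ᵥ v) * RCLike.re (star w ⬝ᵥ A *ᵥ w) := by
  let := A.toSeminormedAddCommGroup hA
  let := A.toInnerProductSpace hA
  have h := inner_mul_inner_self_le (𝕜 := 𝕜) v w
  rw [norm_inner_symm w v, ← sq] at h
  simp only [dotProduct_comm (star _)]
  exact h

variable {A : Matrix n n 𝕜} {y : n → 𝕜} {c : 𝕜}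

theorem PosSemidef.nonneg_of_mulVec_eq_const (hA : A.PosSemidef) (hAy : A *ᵥ y = fun _ => c)
    (hy : ∑ i, y i = 1) : 0 ≤ c := by
  simpa [hAy, star_dotProduct_const, hy] using hA.dotProduct_mulVec_nonneg y

theorem PosSemidef.le_of_sub_smul_allOnes {t : 𝕜}
    (ht : (A - t • of fun _ _ => (1 : 𝕜)).PosSemidef)
    (hAy : A *ᵥ y = fun _ => c) (hy : ∑ i, y i = 1) : t ≤ c := by
  have h := ht.dotProduct_mulVec_nonneg y
  rw [sub_mulVec, dotProduct_sub, smul_mulVec, dotProduct_smul, star_dotProduct_allOnes_mulVec,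
    hAy, star_dotProduct_const, hy, star_one, one_mul, one_mul, smul_eq_mul, mul_one] at h
  exact sub_nonneg.mp h

theorem PosSemidef.sub_smul_allOnes_of_mulVec_eq_const (hA : A.PosSemidef)
    (hAy : A *ᵥ y = fun _ => c) (hy : ∑ i, y i = 1) :
    (A - c • of fun _ _ => (1 : 𝕜)).PosSemidef := by
  obtain ⟨r, hr, rfl⟩ := RCLike.nonneg_iff_exists_ofReal.mp (hA.nonneg_of_mulVec_eq_const hAy hy)
  refine .of_dotProduct_mulVec_nonneg
    (hA.isHermitian.sub (by ext; simp [RCLike.real_smul_eq_coe_mul])) fun v => ?_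
  have key : r * ‖∑ i, v i‖ ^ 2 ≤ RCLike.re (star v ⬝ᵥ A *ᵥ v) := by
    have h := hA.norm_dotProduct_mulVec_sq_le v y
    rw [hAy, star_dotProduct_const, star_dotProduct_const, hy, star_one, one_mul] at h
    rw [norm_mul, norm_star, RCLike.norm_ofReal, abs_of_nonneg hr, RCLike.ofReal_re] at h
    rcases hr.eq_or_lt with rfl | hr
    · simpa using hA.re_dotProduct_nonneg v
    · nlinarith
  obtain ⟨q, -, hq⟩ := RCLike.nonneg_iff_exists_ofReal.mp (hA.dotProduct_mulVec_nonneg v)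
  rw [sub_mulVec, dotProduct_sub, smul_mulVec, dotProduct_smul, star_dotProduct_allOnes_mulVec,
    smul_eq_mul, RCLike.star_def, RCLike.conj_mul, ← hq]
  rw [← hq, RCLike.ofReal_re] at key
  exact_mod_cast sub_nonneg.mpr key

end Matrix

theorem minIdx_eq_of_mulVec_eq_const {k : Type*} [Fintype k] {A : Matrix k k ℂ}
    (hA : A.PosSemidef) {y : k → ℂ} {c : ℂ} (hAy : A *ᵥ y = fun _ => c) (hy : ∑ i, y i = 1) :
    (minIdx A : ℂ) = c := by
  obtain ⟨r, hr, rfl⟩ := RCLike.nonneg_iff_exists_ofReal.mp (hA.nonneg_of_mulVec_eq_const hAy hy)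
  have hmax : IsGreatest {t : ℝ | 0 ≤ t ∧ (A - (t : ℂ) • of fun _ _ => (1 : ℂ)).PosSemidef} r :=
    ⟨⟨hr, hA.sub_smul_allOnes_of_mulVec_eq_const hAy hy⟩,
      fun t ht => RCLike.ofReal_le_ofReal.mp (ht.2.le_of_sub_smul_allOnes hAy hy)⟩
  rw [minIdx, hmax.csSup_eq]
  rfl

/-- If a unit vector `x` with nonzero entries is an eigenvector of `A ∘ xx*` with
eigenvalue `λ`, then `Ay = λp` for `y = (|x_1|²,...,|x_n|²)`; moreover if `A` is
positive semidefinite then `λ = I(A)`. -/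
theorem mulVec_of_hadamard_eigenvector {n : ℕ} (A : Matrix (Fin n) (Fin n) ℂ)
    (x : Fin n → ℂ) (hx : (∑ i, ‖x i‖ ^ 2) = 1) (hxne : ∀ i, x i ≠ 0) (l : ℂ)
    (heig : (A.hadamard (Matrix.vecMulVec x (star x))).mulVec x = l • x) :
    (A.mulVec (fun i => ((‖x i‖ : ℂ) ^ 2)) = fun _ => l) ∧
    (A.PosSemidef → l = (minIdx A : ℂ)) := by
  have hAy : A *ᵥ (fun i => (‖x i‖ : ℂ) ^ 2) = fun _ => l := by
    have hnorm : star x * x = fun i => (‖x i‖ : ℂ) ^ 2 := funext fun i => Complex.conj_mul' (x i)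
    rw [hadamard_vecMulVec_mulVec, hnorm] at heig
    funext i
    exact mul_left_cancel₀ (hxne i) ((congrFun heig i).trans (mul_comm l (x i)))
  refine ⟨hAy, fun hA => (minIdx_eq_of_mulVec_eq_const hA hAy ?_).symm⟩
  exact_mod_cast hx
end

section
/- For any positive semidefinite n×n matrix A, the Frobenius-norm Hadamard index is attained at a rank-one projection: there exists a unit vector x ∈ ℂ^n such that I(2, A) = ‖A ∘ xx*‖_2, where ‖·‖_2 is the Frobenius norm. -/
open Matrix ComplexOrder

/-- The Frobenius norm of a complex matrix. -/
noncomputable def frobNorm {k : Type*} [Fintype k] (A : Matrix k k ℂ) : ℝ :=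
  Real.sqrt (∑ i, ∑ j, ‖A i j‖ ^ 2)

/-- The Frobenius-norm Hadamard index `I(2, A)`. -/
noncomputable def frobIdx {k : Type*} [Fintype k] (A : Matrix k k ℂ) : ℝ :=
  sInf {r : ℝ | ∃ B : Matrix k k ℂ, B.PosSemidef ∧ frobNorm B = 1 ∧ r = frobNorm (A.hadamard B)}

/-!
Write a positive semidefinite `B` as `∑ₖ μₖ uₖuₖ*` with an orthonormal eigenbasis `uₖ` and
`μₖ ≥ 0`. Expanding `|bᵢⱼ|²` gives, for any matrix `C`,
`∑ᵢⱼ cᵢⱼ |bᵢⱼ|² = ∑ₖₗ μₖ μₗ wₖₗ* C wₖₗ` with `wₖₗ = ūₖ ∘ uₗ`.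
For `C = A ∘ Aᵀ`, whose entries are `|aᵢⱼ|²` and which is positive semidefinite by Schur's
product theorem, the left side is `‖A ∘ B‖²` and every term on the right is nonnegative; the
diagonal terms are `μₖ² ‖A ∘ uₖuₖ*‖²`. For the all-ones `C` the identity reads
`‖B‖² = ∑ₖ μₖ²`. Hence `‖A ∘ B‖² ≥ ‖B‖² · min_{‖x‖ = 1} ‖A ∘ xx*‖²`, and the minimum over the
compact unit sphere is attained.
-/

open Finset

variable {ι κ : Type*}

theorem hadamard_transpose_apply {A : Matrix ι ι ℂ} (hA : A.IsHermitian) (i j : ι) :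
    (A ⊙ Aᵀ) i j = (‖A i j‖ : ℂ) ^ 2 := by
  rw [hadamard_apply, transpose_apply, ← hA.apply j i, Complex.star_def, Complex.mul_conj']

variable [Fintype ι] [Fintype κ]

theorem sum_mul_norm_sq_sum_smul_vecMulVec (C : Matrix ι ι ℂ) (c : κ → ℝ) (u : κ → ι → ℂ) :
    ∑ i, ∑ j, C i j * (‖(∑ k, (c k : ℂ) • vecMulVec (u k) (star (u k))) i j‖ : ℂ) ^ 2 =
      ∑ k, ∑ l, (c k * c l : ℂ) * (star (star (u k) * u l) ⬝ᵥ C *ᵥ (star (u k) * u l)) := by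
  simp_rw [← Complex.mul_conj', Matrix.sum_apply, Matrix.smul_apply, vecMulVec_apply, map_sum,
    sum_mul_sum, mul_sum, dotProduct, mulVec, dotProduct, mul_sum]
  simp only [sum_comm (s := (univ : Finset ι)) (t := (univ : Finset κ))]
  refine sum_congr rfl fun k _ => sum_congr rfl fun l _ => sum_congr rfl fun i _ =>
    sum_congr rfl fun j _ => ?_
  simp only [Pi.mul_apply, Pi.star_apply, star_mul', Complex.star_def, map_mul, Complex.conj_conj,
    Complex.conj_ofReal, smul_eq_mul]
  ring

theorem Matrix.IsHermitian.eq_sum_smul_vecMulVec [DecidableEq ι] {B : Matrix ι ι ℂ}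
    (hB : B.IsHermitian) :
    B = ∑ k, (hB.eigenvalues k : ℂ) •
      vecMulVec ⇑(hB.eigenvectorBasis k) (star ⇑(hB.eigenvectorBasis k)) := by
  ext i j
  conv_lhs => rw [hB.spectral_theorem, Unitary.conjStarAlgAut_apply]
  simp [Matrix.mul_apply, Matrix.sum_apply, vecMulVec_apply, diagonal_apply, mul_comm,
    mul_assoc]

theorem Matrix.IsHermitian.sum_star_mul_eigenvectorBasis [DecidableEq ι] {B : Matrix ι ι ℂ}
    (hB : B.IsHermitian) (k l : ι) :
    ∑ i, star (hB.eigenvectorBasis k i) * hB.eigenvectorBasis l i = if k = l then 1 else 0 := by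
  rw [← orthonormal_iff_ite.1 hB.eigenvectorBasis.orthonormal k l,
    EuclideanSpace.inner_eq_star_dotProduct, dotProduct_comm]
  rfl

theorem frobNorm_nonneg (M : Matrix ι ι ℂ) : 0 ≤ frobNorm M :=
  Real.sqrt_nonneg _

theorem frobNorm_sq (M : Matrix ι ι ℂ) : frobNorm M ^ 2 = ∑ i, ∑ j, ‖M i j‖ ^ 2 :=
  Real.sq_sqrt (by positivity)

theorem ofReal_frobNorm_hadamard_sq {A : Matrix ι ι ℂ} (hA : A.IsHermitian) (M : Matrix ι ι ℂ) :
    (frobNorm (A ⊙ M) : ℂ) ^ 2 = ∑ i, ∑ j, (A ⊙ Aᵀ) i j * (‖M i j‖ : ℂ) ^ 2 := by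
  rw [← Complex.ofReal_pow, frobNorm_sq]
  simp_rw [hadamard_transpose_apply hA, hadamard_apply, norm_mul, mul_pow]
  push_cast
  rfl

theorem frobNorm_vecMulVec_star (x : ι → ℂ) :
    frobNorm (vecMulVec x (star x)) = ∑ i, ‖x i‖ ^ 2 := by
  rw [frobNorm, ← Real.sqrt_sq (by positivity : 0 ≤ ∑ i, ‖x i‖ ^ 2), sq, sum_mul_sum]
  simp [vecMulVec_apply, mul_pow]

theorem ofReal_frobNorm_hadamard_vecMulVec_sq {A : Matrix ι ι ℂ} (hA : A.IsHermitian)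
    (u : ι → ℂ) :
    (frobNorm (A ⊙ vecMulVec u (star u)) : ℂ) ^ 2 =
      star (star u * u) ⬝ᵥ (A ⊙ Aᵀ) *ᵥ (star u * u) := by
  rw [ofReal_frobNorm_hadamard_sq hA]
  simpa using
    sum_mul_norm_sq_sum_smul_vecMulVec (A ⊙ Aᵀ) (fun _ : Unit => 1) (fun _ => u)

theorem frobNorm_sq_eq_sum_eigenvalues_sq [DecidableEq ι] {B : Matrix ι ι ℂ}
    (hB : B.IsHermitian) : frobNorm B ^ 2 = ∑ k, hB.eigenvalues k ^ 2 := by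
  have h := sum_mul_norm_sq_sum_smul_vecMulVec (of fun _ _ => 1) hB.eigenvalues
    fun k => ⇑(hB.eigenvectorBasis k)
  rw [← hB.eq_sum_smul_vecMulVec] at h
  apply Complex.ofReal_injective
  rw [frobNorm_sq]
  push_cast
  simp only [dotProduct, mulVec, of_apply, one_mul, ← sum_mul, ← star_sum, Pi.mul_apply,
    Pi.star_apply, hB.sum_star_mul_eigenvectorBasis] at h
  simpa [sq] using h

theorem sum_eigenvalues_sq_mul_frobNorm_hadamard_sq_le [DecidableEq ι] {A B : Matrix ι ι ℂ}
    (hA : A.PosSemidef) (hB : B.PosSemidef) :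
    ∑ k, hB.1.eigenvalues k ^ 2 * frobNorm (A ⊙
        vecMulVec ⇑(hB.1.eigenvectorBasis k) (star ⇑(hB.1.eigenvectorBasis k))) ^ 2 ≤
      frobNorm (A ⊙ B) ^ 2 := by
  set μ := hB.1.eigenvalues
  set u : ι → ι → ℂ := fun k => ⇑(hB.1.eigenvectorBasis k)
  set q : ι → ι → ℂ := fun k l => star (star (u k) * u l) ⬝ᵥ (A ⊙ Aᵀ) *ᵥ (star (u k) * u l)
  have hμ : ∀ k, (0 : ℂ) ≤ μ k := fun k => by exact_mod_cast hB.eigenvalues_nonneg k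
  have hq : ∀ k l, 0 ≤ q k l := fun k l => (hA.hadamard hA.transpose).dotProduct_mulVec_nonneg _
  have hexp : (frobNorm (A ⊙ B) : ℂ) ^ 2 = ∑ k, ∑ l, (μ k * μ l : ℂ) * q k l := by
    rw [ofReal_frobNorm_hadamard_sq hA.1, ← sum_mul_norm_sq_sum_smul_vecMulVec (A ⊙ Aᵀ) μ u,
      ← hB.1.eq_sum_smul_vecMulVec]
  rw [← Complex.real_le_real]
  push_cast
  rw [hexp]
  calc ∑ k, (μ k : ℂ) ^ 2 * (frobNorm (A ⊙ vecMulVec (u k) (star (u k))) : ℂ) ^ 2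
      = ∑ k, (μ k * μ k : ℂ) * q k k := by
        simp only [ofReal_frobNorm_hadamard_vecMulVec_sq hA.1, sq, q]
    _ ≤ ∑ k, ∑ l, (μ k * μ l : ℂ) * q k l := sum_le_sum fun k _ =>
        single_le_sum (f := fun l => (μ k * μ l : ℂ) * q k l)
          (fun l _ => mul_nonneg (mul_nonneg (hμ k) (hμ l)) (hq k l)) (mem_univ k)

theorem frobIdx_eq_of_isMinOn [DecidableEq ι] {A : Matrix ι ι ℂ} (hA : A.PosSemidef)
    {v : EuclideanSpace ℂ ι} (hv : v ∈ Metric.sphere 0 1)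
    (hmin : IsMinOn (fun x : EuclideanSpace ℂ ι => frobNorm (A ⊙ vecMulVec ⇑x (star ⇑x)))
      (Metric.sphere 0 1) v) :
    frobIdx A = frobNorm (A ⊙ vecMulVec ⇑v (star ⇑v)) := by
  have hnorm : ∀ x ∈ Metric.sphere (0 : EuclideanSpace ℂ ι) 1,
      frobNorm (vecMulVec ⇑x (star ⇑x)) = 1 := fun x hx => by
    rw [frobNorm_vecMulVec_star, ← EuclideanSpace.norm_sq_eq, mem_sphere_zero_iff_norm.1 hx,
      one_pow]
  refine IsLeast.csInf_eq ⟨⟨_, posSemidef_vecMulVec_self_star _, hnorm v hv, rfl⟩, ?_⟩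
  rintro _ ⟨B, hB, hB1, rfl⟩
  set f := fun x : EuclideanSpace ℂ ι => frobNorm (A ⊙ vecMulVec ⇑x (star ⇑x))
  have hf : ∀ k, f v ^ 2 ≤ f (hB.1.eigenvectorBasis k) ^ 2 := fun k =>
    pow_le_pow_left₀ (frobNorm_nonneg _)
      (hmin (mem_sphere_zero_iff_norm.2 (hB.1.eigenvectorBasis.norm_eq_one k))) 2
  show f v ≤ frobNorm (A ⊙ B)
  rw [← pow_le_pow_iff_left₀ (frobNorm_nonneg _) (frobNorm_nonneg _) two_ne_zero]
  calc f v ^ 2 = ∑ k, hB.1.eigenvalues k ^ 2 * f v ^ 2 := by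
        rw [← sum_mul, ← frobNorm_sq_eq_sum_eigenvalues_sq, hB1, one_pow, one_mul]
    _ ≤ ∑ k, hB.1.eigenvalues k ^ 2 * f (hB.1.eigenvectorBasis k) ^ 2 :=
        sum_le_sum fun k _ => mul_le_mul_of_nonneg_left (hf k) (sq_nonneg _)
    _ ≤ frobNorm (A ⊙ B) ^ 2 := sum_eigenvalues_sq_mul_frobNorm_hadamard_sq_le hA hB

theorem continuous_frobNorm_hadamard_vecMulVec (A : Matrix ι ι ℂ) :
    Continuous fun x : EuclideanSpace ℂ ι => frobNorm (A ⊙ vecMulVec ⇑x (star ⇑x)) := by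
  unfold frobNorm
  simp only [hadamard_apply, vecMulVec_apply, Pi.star_apply]
  fun_prop

/-- `I(2, A)` is attained at a rank-one projection. -/
theorem frobIdx_attained_rank_one {n : ℕ} (hn : 0 < n) (A : Matrix (Fin n) (Fin n) ℂ)
    (hA : A.PosSemidef) :
    ∃ x : Fin n → ℂ, (∑ i, ‖x i‖ ^ 2) = 1 ∧
      frobIdx A = frobNorm (A.hadamard (Matrix.vecMulVec x (star x))) := by
  have : Nonempty (Fin n) := ⟨⟨0, hn⟩⟩
  obtain ⟨v, hv, hmin⟩ := (isCompact_sphere (0 : EuclideanSpace ℂ (Fin n)) 1).exists_isMinOn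
    (NormedSpace.sphere_nonempty.2 zero_le_one)
    (continuous_frobNorm_hadamard_vecMulVec A).continuousOn
  refine ⟨v, ?_, frobIdx_eq_of_isMinOn hA hv hmin⟩
  rw [← EuclideanSpace.norm_sq_eq, mem_sphere_zero_iff_norm.1 hv, one_pow]
end

section
/- Let A be positive semidefinite in M_n(ℂ) and B = Σ_{i=1}^k B_i where the B_i are positive semidefinite with pairwise products B_iB_j = 0 for i ≠ j. Then Σ_{i=1}^k ‖A ∘ B_i‖_2² ≤ ‖A ∘ B‖_2², where ‖·‖_2 is the Frobenius norm. -/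
/-!
Since `A ∘ Bᵢ` is Hermitian, `‖A ∘ ∑ Bᵢ‖₂² = ∑ᵢ ∑ⱼ tr((A ∘ Bᵢ)(A ∘ Bⱼ))`, and each term equals
`tr((A ∘ Aᵀ ∘ Bᵢ) Bⱼ)`. By the Schur product theorem `A ∘ Aᵀ ∘ Bᵢ` is positive semidefinite, and
the trace of a product of positive semidefinite matrices is nonnegative, so every term, not only
the diagonal ones `‖A ∘ Bᵢ‖₂²`, is nonnegative.
-/

open Matrix ComplexOrder

namespace Matrix

variable {n : Type*}

theorem hadamard_sum {ι R : Type*} [NonUnitalNonAssocSemiring R] (s : Finset ι)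
    (A : Matrix n n R) (B : ι → Matrix n n R) : A ⊙ ∑ i ∈ s, B i = ∑ i ∈ s, A ⊙ B i := by
  ext p q
  simp only [hadamard_apply, sum_apply, Finset.mul_sum]

variable [Fintype n]

theorem trace_hadamard_mul_hadamard {R : Type*} [CommSemiring R] (A B C : Matrix n n R) :
    trace ((A ⊙ B) * (A ⊙ C)) = trace ((A ⊙ Aᵀ ⊙ B) * C) := by
  simp only [trace, diag_apply, mul_apply, hadamard_apply, transpose_apply]
  exact Finset.sum_congr rfl fun p _ => Finset.sum_congr rfl fun q _ => by ring

theorem sum_trace_mul_self_le_trace_mul_self_sum {ι R : Type*} [Fintype ι]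
    [NonUnitalNonAssocSemiring R] [PartialOrder R] [IsOrderedAddMonoid R]
    (X : ι → Matrix n n R) (hX : ∀ i j, 0 ≤ trace (X i * X j)) :
    ∑ i, trace (X i * X i) ≤ trace ((∑ i, X i) * ∑ i, X i) := by
  rw [Finset.sum_mul_sum, trace_sum]
  refine Finset.sum_le_sum fun i _ => ?_
  rw [trace_sum]
  exact Finset.single_le_sum (fun j _ => hX i j) (Finset.mem_univ i)

variable {𝕜 : Type*} [RCLike 𝕜]

theorem PosSemidef.trace_mul_nonneg {A B : Matrix n n 𝕜} (hA : A.PosSemidef)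
    (hB : B.PosSemidef) : 0 ≤ trace (A * B) := by
  classical
  open scoped MatrixOrder in
  obtain ⟨X, rfl⟩ := CStarAlgebra.nonneg_iff_eq_star_mul_self.mp hA.nonneg
  rw [star_eq_conjTranspose, mul_assoc, trace_mul_comm]
  simpa [mul_assoc] using (hB.mul_mul_conjTranspose_same X).trace_nonneg

theorem PosSemidef.trace_hadamard_mul_hadamard_nonneg {A B C : Matrix n n 𝕜}
    (hA : A.PosSemidef) (hB : B.PosSemidef) (hC : C.PosSemidef) :
    0 ≤ trace ((A ⊙ B) * (A ⊙ C)) := by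
  rw [trace_hadamard_mul_hadamard]
  exact ((hA.hadamard hA.transpose).hadamard hB).trace_mul_nonneg hC

end Matrix

theorem ofReal_frobNorm_sq {k : Type*} [Fintype k] (X : Matrix k k ℂ) :
    ((frobNorm X ^ 2 : ℝ) : ℂ) = trace (Xᴴ * X) := by
  rw [frobNorm, Real.sq_sqrt (by positivity)]
  simp only [trace, diag_apply, mul_apply, conjTranspose_apply, Complex.ofReal_sum]
  rw [Finset.sum_comm]
  exact Finset.sum_congr rfl fun p _ => Finset.sum_congr rfl fun q _ => by
    rw [Complex.ofReal_pow, ← Complex.mul_conj']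
    exact mul_comm _ _

theorem Matrix.IsHermitian.ofReal_frobNorm_sq {k : Type*} [Fintype k] {X : Matrix k k ℂ}
    (hX : X.IsHermitian) : ((frobNorm X ^ 2 : ℝ) : ℂ) = trace (X * X) := by
  rw [_root_.ofReal_frobNorm_sq, hX.eq]

theorem sum_sq_frobNorm_hadamard_le_general {n k : ℕ} (A : Matrix (Fin n) (Fin n) ℂ)
    (hA : A.PosSemidef) (B : Fin k → Matrix (Fin n) (Fin n) ℂ)
    (hB : ∀ i, (B i).PosSemidef) :
    (∑ i, frobNorm (A.hadamard (B i)) ^ 2) ≤ frobNorm (A.hadamard (∑ i, B i)) ^ 2 := by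
  rw [← Complex.real_le_real, Complex.ofReal_sum,
    (hA.hadamard (posSemidef_sum _ fun i _ => hB i)).isHermitian.ofReal_frobNorm_sq,
    hadamard_sum]
  simp only [fun i => (hA.hadamard (hB i)).isHermitian.ofReal_frobNorm_sq]
  exact sum_trace_mul_self_le_trace_mul_self_sum _ fun i j =>
    hA.trace_hadamard_mul_hadamard_nonneg (hB i) (hB j)

/-- If `B = ∑ B_i` with the `B_i` positive semidefinite and `B_i B_j = 0` for `i ≠ j`,
then `∑ ‖A ∘ B_i‖₂² ≤ ‖A ∘ B‖₂²`. -/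
theorem sum_sq_frobNorm_hadamard_le {n k : ℕ} (A : Matrix (Fin n) (Fin n) ℂ)
    (hA : A.PosSemidef) (B : Fin k → Matrix (Fin n) (Fin n) ℂ)
    (hB : ∀ i, (B i).PosSemidef) (horth : ∀ i j, i ≠ j → B i * B j = 0) :
    (∑ i, frobNorm (A.hadamard (B i)) ^ 2) ≤ frobNorm (A.hadamard (∑ i, B i)) ^ 2 :=
  sum_sq_frobNorm_hadamard_le_general A hA B hB
end

section
/- Let 0 < λ ≠ μ and Λ_0 be the 2×2 matrix with entries Λ_0 = [[λ²+λ^{-2}, λμ+(λμ)^{-1}],[λμ+(λμ)^{-1}, μ²+μ^{-2}]]. Then Λ_0 is positive definite and I(Λ_0) = (λ+μ)²/(1+λ²μ²). -/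
open Matrix ComplexOrder

/-! For real symmetric `A = !![a, b; b, c]`, `A - tP` is positive semidefinite exactly when its
determinant `(ac - b²) - t(a + c - 2b)` is nonnegative, so `I(A) = (ac - b²)/(a + c - 2b)` whenever
`a + c > 2b`. For `Λ₀` these two quantities are `(λ² - μ²)²/(λμ)²` and
`(λ - μ)²(1 + λ²μ²)/(λμ)²`. -/

section FinTwo

variable {a b c : ℝ}

theorem quadratic_form_nonneg_iff :
    (∀ u s : ℝ, 0 ≤ a * u ^ 2 + 2 * b * u * s + c * s ^ 2) ↔ 0 ≤ a ∧ 0 ≤ c ∧ b ^ 2 ≤ a * c := by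
  constructor
  · intro h
    have hdisc : discrim a (2 * b) c ≤ 0 := discrim_le_zero fun u => by
      simpa [sq, mul_comm, mul_assoc, mul_left_comm] using h u 1
    refine ⟨by simpa using h 1 0, by simpa using h 0 1, ?_⟩
    rw [discrim] at hdisc
    linarith
  · rintro ⟨ha, hc, hdet⟩ u s
    rcases ha.eq_or_lt with rfl | ha
    · obtain rfl : b = 0 := by nlinarith
      simpa using mul_nonneg hc (sq_nonneg s)
    · have : 0 ≤ a * (a * u ^ 2 + 2 * b * u * s + c * s ^ 2) := by
        nlinarith [sq_nonneg (a * u + b * s), mul_nonneg (sub_nonneg.2 hdet) (sq_nonneg s)]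
      exact nonneg_of_mul_nonneg_right this ha

theorem star_dotProduct_mulVec_fin_two (x : Fin 2 → ℂ) :
    star x ⬝ᵥ (!![(a : ℂ), b; b, c] *ᵥ x) =
      ((a * (x 0).re ^ 2 + 2 * b * (x 0).re * (x 1).re + c * (x 1).re ^ 2 +
        (a * (x 0).im ^ 2 + 2 * b * (x 0).im * (x 1).im + c * (x 1).im ^ 2) : ℝ) : ℂ) := by
  apply Complex.ext <;>
    simp [dotProduct, mulVec, Fin.sum_univ_two, Complex.mul_re, Complex.mul_im,
      -Complex.ofReal_pow] <;> ring

theorem isHermitian_fin_two : (!![(a : ℂ), b; b, c]).IsHermitian := by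
  ext i j
  fin_cases i <;> fin_cases j <;> simp

theorem posSemidef_fin_two_iff :
    (!![(a : ℂ), b; b, c]).PosSemidef ↔ 0 ≤ a ∧ 0 ≤ c ∧ b ^ 2 ≤ a * c := by
  simp_rw [posSemidef_iff_dotProduct_mulVec, star_dotProduct_mulVec_fin_two, Complex.zero_le_real,
    ← quadratic_form_nonneg_iff]
  refine ⟨fun h u s => by simpa using h.2 ![(u : ℂ), s], fun h => ⟨isHermitian_fin_two, fun x => ?_⟩⟩
  exact add_nonneg (h _ _) (h _ _)

theorem posDef_fin_two (ha : 0 < a) (hdet : b ^ 2 < a * c) : (!![(a : ℂ), b; b, c]).PosDef := by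
  have hc : 0 < c := by nlinarith
  have hpsd := posSemidef_fin_two_iff.2 ⟨ha.le, hc.le, hdet.le⟩
  rw [hpsd.posDef_iff_det_ne_zero, det_fin_two_of]
  exact_mod_cast (sub_pos.2 (sq b ▸ hdet)).ne'

theorem fin_two_sub_smul_allOnes (t : ℝ) :
    !![(a : ℂ), b; b, c] - (t : ℂ) • (Matrix.of fun _ _ => (1 : ℂ)) =
      !![((a - t : ℝ) : ℂ), ((b - t : ℝ) : ℂ); ((b - t : ℝ) : ℂ), ((c - t : ℝ) : ℂ)] := by
  ext i j
  fin_cases i <;> fin_cases j <;> simp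

/-- The diagonal conditions are implied by the determinant one, since
`(a - t)(a + c - 2b) ≥ (a - b)²` once `t(a + c - 2b) ≤ ac - b²`. -/
theorem posSemidef_fin_two_sub_smul_allOnes_iff (hs : 0 < a + c - 2 * b) (t : ℝ) :
    (!![(a : ℂ), b; b, c] - (t : ℂ) • (Matrix.of fun _ _ => (1 : ℂ))).PosSemidef ↔
      t * (a + c - 2 * b) ≤ a * c - b ^ 2 := by
  rw [fin_two_sub_smul_allOnes, posSemidef_fin_two_iff]
  constructor
  · rintro ⟨-, -, hdet⟩
    linarith
  · intro ht
    have hat : 0 ≤ (a - t) * (a + c - 2 * b) := by nlinarith [sq_nonneg (a - b)]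
    have hct : 0 ≤ (c - t) * (a + c - 2 * b) := by nlinarith [sq_nonneg (c - b)]
    exact ⟨nonneg_of_mul_nonneg_left hat hs, nonneg_of_mul_nonneg_left hct hs, by linarith⟩

theorem minIdx_fin_two (hdet : b ^ 2 ≤ a * c) (hs : 0 < a + c - 2 * b) :
    minIdx !![(a : ℂ), b; b, c] = (a * c - b ^ 2) / (a + c - 2 * b) := by
  have hset : {t : ℝ | 0 ≤ t ∧
      (!![(a : ℂ), b; b, c] - (t : ℂ) • (Matrix.of fun _ _ => (1 : ℂ))).PosSemidef} =
      Set.Icc 0 ((a * c - b ^ 2) / (a + c - 2 * b)) := by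
    ext t
    simp only [Set.mem_ofPred_eq, Set.mem_Icc, posSemidef_fin_two_sub_smul_allOnes_iff hs,
      le_div_iff₀ hs]
  rw [minIdx, hset, csSup_Icc]
  exact div_nonneg (sub_nonneg.2 hdet) hs.le

end FinTwo

theorem minIdx_lambda0 (l m : ℝ) (hl : 0 < l) (hm : 0 < m) (hlm : l ≠ m) :
    (!![((l : ℂ))^2 + ((l : ℂ))⁻¹^2, (l : ℂ) * m + ((l : ℂ) * m)⁻¹;
       (l : ℂ) * m + ((l : ℂ) * m)⁻¹, ((m : ℂ))^2 + ((m : ℂ))⁻¹^2]).PosDef ∧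
    minIdx !![((l : ℂ))^2 + ((l : ℂ))⁻¹^2, (l : ℂ) * m + ((l : ℂ) * m)⁻¹;
       (l : ℂ) * m + ((l : ℂ) * m)⁻¹, ((m : ℂ))^2 + ((m : ℂ))⁻¹^2] =
      (l + m) ^ 2 / (1 + l ^ 2 * m ^ 2) := by
  set a : ℝ := l ^ 2 + l⁻¹ ^ 2
  set b : ℝ := l * m + (l * m)⁻¹
  set c : ℝ := m ^ 2 + m⁻¹ ^ 2
  have hmatrix : !![((l : ℂ))^2 + ((l : ℂ))⁻¹^2, (l : ℂ) * m + ((l : ℂ) * m)⁻¹;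
      (l : ℂ) * m + ((l : ℂ) * m)⁻¹, ((m : ℂ))^2 + ((m : ℂ))⁻¹^2] = !![(a : ℂ), b; b, c] := by
    simp only [a, b, c]
    push_cast
    rfl
  have hdet : a * c - b ^ 2 = (l - m) ^ 2 * (l + m) ^ 2 / (l * m) ^ 2 := by
    simp only [a, b, c]
    field_simp
    ring
  have hs : a + c - 2 * b = (l - m) ^ 2 * (1 + l ^ 2 * m ^ 2) / (l * m) ^ 2 := by
    simp only [a, b, c]
    field_simp
    ring
  have hlm' : l - m ≠ 0 := sub_ne_zero.2 hlm
  have hdet_pos : 0 < a * c - b ^ 2 := by rw [hdet]; positivity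
  have hs_pos : 0 < a + c - 2 * b := by rw [hs]; positivity
  rw [hmatrix, minIdx_fin_two (by linarith) hs_pos, hdet, hs]
  refine ⟨posDef_fin_two (by positivity) (by linarith), ?_⟩
  field_simp
end

section
/- Let A be a positive semidefinite n×n matrix of rank one. Then for every unitarily invariant norm N on M_n(ℂ) normalized so that N(E_{11}) = 1, the N-Hadamard index satisfies I(N, A) = min_{1≤i≤n} A_{ii}. -/
open Matrix ComplexOrder

/-!
Write `A = v v*`, so that `A ∘ B = diag(v) B diag(v)*` and `A_ii = |v_i|²`. A diagonal matrix with
entries of modulus at most one is the average of two diagonal unitaries, so multiplying by it on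
either side does not increase a unitarily invariant norm. Rescaling by `diag(√m / v_i)`, where
`m = min_i |v_i|²`, turns `A ∘ B` into `m B`; hence `N(A ∘ B) ≥ m N(B) = m`, with equality for
`B = E_ii` at a minimizing index `i`.
-/

theorem Complex.exists_norm_eq_one_eq_midpoint {z : ℂ} (hz : ‖z‖ ≤ 1) :
    ∃ u w : ℂ, ‖u‖ = 1 ∧ ‖w‖ = 1 ∧ z = (2 : ℂ)⁻¹ * (u + w) := by
  -- `z = r ω` with `|ω| = 1`, and `r = |z|` is the midpoint of the unit numbers `r ± i √(1 - r²)`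
  set r := ‖z‖
  set s := √(1 - r ^ 2)
  set ω := exp (arg z * I)
  have hs : r ^ 2 + s ^ 2 = 1 := by
    rw [Real.sq_sqrt (by nlinarith [norm_nonneg z])]; ring
  have hnorm : ∀ t : ℝ, t ^ 2 = s ^ 2 → ‖((r : ℂ) + t * I) * ω‖ = 1 := fun t ht => by
    rw [norm_mul, norm_exp_ofReal_mul_I, mul_one, norm_def, normSq_add_mul_I, ht, hs,
      Real.sqrt_one]
  refine ⟨(r + s * I) * ω, (r + (-s : ℝ) * I) * ω, hnorm s rfl, hnorm (-s) (neg_sq s), ?_⟩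
  conv_lhs => rw [← norm_mul_exp_arg_mul_I z]
  push_cast
  ring

theorem Matrix.diagonal_mem_unitaryGroup {ι : Type*} [Fintype ι] [DecidableEq ι] {d : ι → ℂ}
    (hd : ∀ i, ‖d i‖ = 1) : diagonal d ∈ unitaryGroup ι ℂ := by
  rw [mem_unitaryGroup_iff, star_eq_conjTranspose, diagonal_conjTranspose, diagonal_mul_diagonal,
    ← diagonal_one]
  congr 1
  ext i
  simp [Complex.mul_conj', hd i]

theorem Matrix.exists_unitary_diagonal_eq_midpoint {ι : Type*} [Fintype ι] [DecidableEq ι]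
    {d : ι → ℂ} (hd : ∀ i, ‖d i‖ ≤ 1) :
    ∃ U ∈ unitaryGroup ι ℂ, ∃ W ∈ unitaryGroup ι ℂ, diagonal d = (2 : ℂ)⁻¹ • (U + W) := by
  choose u w hu hw huw using fun i => Complex.exists_norm_eq_one_eq_midpoint (hd i)
  refine ⟨_, diagonal_mem_unitaryGroup hu, _, diagonal_mem_unitaryGroup hw, ?_⟩
  rw [diagonal_add, ← diagonal_smul]
  exact congrArg diagonal (funext huw)

theorem Matrix.PosSemidef.exists_eq_vecMulVec_of_rank_eq_one {ι : Type*} [Fintype ι]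
    [DecidableEq ι] {A : Matrix ι ι ℂ} (hA : A.PosSemidef) (hrk : A.rank = 1) :
    ∃ v : ι → ℂ, A = vecMulVec v (star v) := by
  have hH := hA.isHermitian
  obtain ⟨⟨j, _⟩, hj⟩ := Fintype.card_eq_one_iff.mp (hH.rank_eq_card_non_zero_eigs ▸ hrk)
  have hzero : ∀ l, l ≠ j → hH.eigenvalues l = 0 := fun l hl => by
    by_contra h
    exact hl (congrArg Subtype.val (hj ⟨l, h⟩))
  set U : Matrix ι ι ℂ := (hH.eigenvectorUnitary : Matrix ι ι ℂ)
  refine ⟨fun i => (√(hH.eigenvalues j) : ℂ) * U i j, ?_⟩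
  ext i k
  have hsq : (√(hH.eigenvalues j) : ℂ) * (√(hH.eigenvalues j) : ℂ) = hH.eigenvalues j := by
    rw [← Complex.ofReal_mul, Real.mul_self_sqrt (hA.eigenvalues_nonneg j)]
  conv_lhs => rw [hH.spectral_theorem, Unitary.conjStarAlgAut_apply]
  rw [mul_apply, Finset.sum_eq_single j (fun l _ hl => by simp [hzero l hl]) (by simp)]
  simp only [mul_diagonal, star_apply, vecMulVec_apply, Pi.star_apply, star_mul',
    Complex.star_def, Complex.conj_ofReal, Function.comp_apply]
  linear_combination (-(U i j * starRingEnd ℂ (U k j))) * hsq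

theorem Matrix.hadamard_single {ι : Type*} [DecidableEq ι] {α : Type*} [MulZeroClass α]
    (A : Matrix ι ι α) (i j : ι) (c : α) : A ⊙ single i j c = single i j (A i j * c) := by
  ext k l
  by_cases h : i = k ∧ j = l
  · obtain ⟨rfl, rfl⟩ := h
    simp
  · simp [single_apply_of_ne _ _ _ _ _ h]

structure IsUnitarilyInvariantSeminorm {ι : Type*} [Fintype ι] [DecidableEq ι]
    (N : Matrix ι ι ℂ → ℝ) : Prop where
  add_le : ∀ B C, N (B + C) ≤ N B + N C
  smul : ∀ (z : ℂ) B, N (z • B) = ‖z‖ * N B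
  unitary_mul_mul : ∀ U V B, U ∈ unitaryGroup ι ℂ → V ∈ unitaryGroup ι ℂ → N (U * B * V) = N B

namespace IsUnitarilyInvariantSeminorm

variable {ι : Type*} [Fintype ι] [DecidableEq ι] {N : Matrix ι ι ℂ → ℝ}

theorem smul_half_add_le (hN : IsUnitarilyInvariantSeminorm N) {X Y : Matrix ι ι ℂ} {c : ℝ}
    (hX : N X ≤ c) (hY : N Y ≤ c) : N ((2 : ℂ)⁻¹ • (X + Y)) ≤ c := by
  have h2 : ‖(2 : ℂ)⁻¹‖ = 2⁻¹ := by norm_num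
  rw [hN.smul, h2]
  linarith [hN.add_le X Y]

theorem unitary_mul (hN : IsUnitarilyInvariantSeminorm N) {U : Matrix ι ι ℂ}
    (hU : U ∈ unitaryGroup ι ℂ) (X : Matrix ι ι ℂ) : N (U * X) = N X := by
  simpa using hN.unitary_mul_mul U 1 X hU (one_mem _)

theorem mul_unitary (hN : IsUnitarilyInvariantSeminorm N) {U : Matrix ι ι ℂ}
    (hU : U ∈ unitaryGroup ι ℂ) (X : Matrix ι ι ℂ) : N (X * U) = N X := by
  simpa using hN.unitary_mul_mul 1 U X (one_mem _) hU

theorem diagonal_mul_le (hN : IsUnitarilyInvariantSeminorm N) {d : ι → ℂ}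
    (hd : ∀ i, ‖d i‖ ≤ 1) (X : Matrix ι ι ℂ) : N (diagonal d * X) ≤ N X := by
  obtain ⟨U, hU, W, hW, hUW⟩ := exists_unitary_diagonal_eq_midpoint hd
  rw [hUW, smul_mul_assoc, add_mul]
  exact hN.smul_half_add_le (hN.unitary_mul hU X).le (hN.unitary_mul hW X).le

theorem mul_diagonal_le (hN : IsUnitarilyInvariantSeminorm N) {d : ι → ℂ}
    (hd : ∀ i, ‖d i‖ ≤ 1) (X : Matrix ι ι ℂ) : N (X * diagonal d) ≤ N X := by
  obtain ⟨U, hU, W, hW, hUW⟩ := exists_unitary_diagonal_eq_midpoint hd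
  rw [hUW, mul_smul_comm, mul_add]
  exact hN.smul_half_add_le (hN.mul_unitary hU X).le (hN.mul_unitary hW X).le

theorem mul_le_hadamard_vecMulVec (hN : IsUnitarilyInvariantSeminorm N) {m : ℝ} (hm : 0 ≤ m)
    {v : ι → ℂ} (hv : ∀ i, m ≤ ‖v i‖ ^ 2) (B : Matrix ι ι ℂ) :
    m * N B ≤ N (vecMulVec v (star v) ⊙ B) := by
  -- if `v i = 0` then `m = 0`, so the junk value `√m / 0 = 0` still satisfies `c i * v i = √m`
  set c : ι → ℂ := fun i => (√m : ℂ) / v i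
  have hcv : ∀ i, c i * v i = √m := fun i => by
    by_cases hvi : v i = 0
    · have : m = 0 := le_antisymm (by simpa [hvi] using hv i) hm
      simp [c, hvi, this]
    · exact div_mul_cancel₀ _ hvi
  have hc : ∀ i, ‖c i‖ ≤ 1 := fun i => by
    simp only [c, norm_div, Complex.norm_real, Real.norm_of_nonneg (Real.sqrt_nonneg m)]
    exact div_le_one_of_le₀ ((Real.sqrt_le_left (norm_nonneg _)).mpr (hv i)) (norm_nonneg _)
  have hscale : diagonal c * (vecMulVec v (star v) ⊙ B) * diagonal (star c) = (m : ℂ) • B := by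
    ext i j
    simp only [diagonal_mul, mul_diagonal, hadamard_apply, vecMulVec_apply, Matrix.smul_apply,
      Pi.star_apply]
    calc c i * (v i * star (v j) * B i j) * star (c j)
        = c i * v i * star (c j * v j) * B i j := by rw [star_mul']; ring
      _ = (m : ℂ) • B i j := by
        rw [hcv, hcv, Complex.star_def, Complex.conj_ofReal, ← Complex.ofReal_mul,
          Real.mul_self_sqrt hm, smul_eq_mul]
  calc m * N B = N (diagonal c * (vecMulVec v (star v) ⊙ B) * diagonal (star c)) := by
        rw [hscale, hN.smul, Complex.norm_real, Real.norm_of_nonneg hm]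
    _ ≤ N (diagonal c * (vecMulVec v (star v) ⊙ B)) := hN.mul_diagonal_le (by simpa using hc) _
    _ ≤ N (vecMulVec v (star v) ⊙ B) := hN.diagonal_mul_le hc _

end IsUnitarilyInvariantSeminorm

theorem hadamard_index_rank_one_general {n : ℕ} (hn : 0 < n)
    (A : Matrix (Fin n) (Fin n) ℂ) (hA : A.PosSemidef) (hrk : A.rank = 1)
    (N : Matrix (Fin n) (Fin n) ℂ → ℝ)
    (htri : ∀ B C, N (B + C) ≤ N B + N C)
    (hhom : ∀ (z : ℂ) B, N (z • B) = ‖z‖ * N B)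
    (huinv : ∀ U V B, U ∈ Matrix.unitaryGroup (Fin n) ℂ →
      V ∈ Matrix.unitaryGroup (Fin n) ℂ → N (U * B * V) = N B)
    (hnorm1 : ∀ i, N (Matrix.single i i (1 : ℂ)) = 1) :
    sInf {r : ℝ | ∃ B : Matrix (Fin n) (Fin n) ℂ,
        B.PosSemidef ∧ N B = 1 ∧ r = N (A.hadamard B)} =
      ⨅ i, (A i i).re := by
  have hN : IsUnitarilyInvariantSeminorm N := ⟨htri, hhom, huinv⟩
  have : Nonempty (Fin n) := ⟨⟨0, hn⟩⟩
  obtain ⟨v, rfl⟩ := hA.exists_eq_vecMulVec_of_rank_eq_one hrk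
  have hdiag : ∀ i, vecMulVec v (star v) i i = ((‖v i‖ ^ 2 : ℝ) : ℂ) := fun i => by
    simp [vecMulVec_apply, Complex.mul_conj']
  simp only [hdiag, Complex.ofReal_re]
  obtain ⟨i₀, hi₀⟩ := exists_eq_ciInf_of_finite (f := fun i => ‖v i‖ ^ 2)
  rw [← hi₀]
  refine IsLeast.csInf_eq ⟨⟨single i₀ i₀ 1, ?_, hnorm1 i₀, ?_⟩, ?_⟩
  · exact diagonal_single i₀ (1 : ℂ) ▸ PosSemidef.diagonal (Pi.single_nonneg.mpr zero_le_one)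
  · rw [hadamard_single, hdiag, ← smul_eq_mul, ← smul_single, hhom, hnorm1,
      Complex.norm_of_nonneg (by positivity), mul_one]
  · rintro r ⟨B, -, hB, rfl⟩
    simpa [hB] using hN.mul_le_hadamard_vecMulVec (by positivity) (fun i => hi₀ ▸
      ciInf_le (Set.finite_range _).bddBelow i) B

/-- For a rank-one positive semidefinite matrix `A` and any unitarily invariant
norm `N` normalized so that `N(E₁₁) = 1`, the `N`-Hadamard index
`I(N, A) = min{N(A ∘ B) : B ⪰ 0, N(B) = 1}` equals `min_i A_ii`. -/
theorem hadamard_index_rank_one {n : ℕ} (hn : 0 < n)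
    (A : Matrix (Fin n) (Fin n) ℂ) (hA : A.PosSemidef) (hrk : A.rank = 1)
    (N : Matrix (Fin n) (Fin n) ℂ → ℝ)
    (htri : ∀ B C, N (B + C) ≤ N B + N C)
    (hhom : ∀ (z : ℂ) B, N (z • B) = ‖z‖ * N B)
    (hdef : ∀ B, N B = 0 → B = 0)
    (huinv : ∀ U V B, U ∈ Matrix.unitaryGroup (Fin n) ℂ →
      V ∈ Matrix.unitaryGroup (Fin n) ℂ → N (U * B * V) = N B)
    (hnorm1 : ∀ i, N (Matrix.single i i (1 : ℂ)) = 1) :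
    sInf {r : ℝ | ∃ B : Matrix (Fin n) (Fin n) ℂ,
        B.PosSemidef ∧ N B = 1 ∧ r = N (A.hadamard B)} =
      ⨅ i, (A i i).re :=
  hadamard_index_rank_one_general hn A hA hrk N htri hhom huinv hnorm1
end
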